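/- Let p ≥ 4 and p₀ be real numbers with 2 ≤ p₀ ≤ p, let λ > 1 and β̂, σ̂, γ̂ > 0, and let ρ be a measure on ℝ with m₂ := ∫_ℝ |z|² ρ(dz) < ∞ and m_{p₀} := ∫_ℝ |z|^{p₀} ρ(dz) < ∞, satisfying 2(p₀−1)λσ̂² + (p₀−1)(2^{p₀−4} + 1/2)·( (9/4)λγ̂²·m₂ + (3/2)^{p₀}·λ^{p₀−1}·γ̂^{p₀}·m_{p₀} ) ≤ 3β̂. Define β(s) = 2(s − ⌊s + 1/2⌋), μ(s,x) = β(s)x − β̂x³, σ(t,x) = σ̂·√t·(1−x²), γ(t,x,z) = γ̂·√t·x·(1+x²)^{1/p}·z, and set c(p₀) := 2^{p₀−4} if p₀ > 3 or p₀ = 2, and c(p₀) := 1/2 if 2 < p₀ ≤ 3. Then there exists a constant K > 0 such that for all s, t ∈ [0,1] and all x, y ∈ ℝ: p₀·|x−y|^{p₀−2}·(x−y)·(μ(s,x)−μ(s,y)) + (p₀(p₀−1)λ/2)·|x−y|^{p₀−2}·|σ(t,x)−σ(t,y)|² + p₀(p₀−1)·c(p₀)·∫_ℝ ( λ·|x−y|^{p₀−2}·|γ(t,x,z)−γ(t,y,z)|²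 + λ^{p₀−1}·|γ(t,x,z)−γ(t,y,z)|^{p₀} ) ρ(dz) ≤ K·|x−y|^{p₀}. -/

import Mathlib

/-!
Write `Q = x² + x y + y²`. The drift term is at most `p₀ |x - y|^p₀ (1 - β̂ Q)` because
`β(s) ≤ 1`, and the diffusion term at most `(2/3) p₀ (p₀ - 1) λ σ̂² |x - y|^p₀ Q` because
`(x + y)² ≤ 4Q/3`. For the jumps, `f(u) = u (1 + u²)^θ` with `θ = 1/p ≤ 1/4` satisfies
`|f x - f y| ≤ (1 + 2θ) |x - y| W^θ`, where `W = 1 + Q/3` is the mean of `1 + u²` over the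
segment between `y` and `x`: compare derivatives, using the tangent line of the concave map
`r ↦ r^θ` at `W`. As `W ≥ 1` and `2θ, p₀θ ≤ 1`, the jump term is at most
`p₀ (p₀ - 1) c(p₀) S |x - y|^p₀ W`, with `S` the bracket of the parameter constraint. That
constraint makes the total coefficient of `|x - y|^p₀ Q` nonpositive.
-/

open MeasureTheory

/-- The sawtooth function `β(s) = 2(s − ⌊s + 1/2⌋)`. -/
noncomputable def sawtooth (s : ℝ) : ℝ := 2 * (s - (⌊s + 1/2⌋ : ℤ))

/-- The double-well drift `μ(s,x) = β(s)x − β̂x³`. -/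
noncomputable def μdw (β' s x : ℝ) : ℝ := sawtooth s * x - β' * x ^ 3

/-- The double-well diffusion coefficient `σ(t,x) = σ̂·√t·(1−x²)`. -/
noncomputable def σdw (σ' t x : ℝ) : ℝ := σ' * Real.sqrt t * (1 - x ^ 2)

/-- The double-well jump coefficient `γ(t,x,z) = γ̂·√t·x·(1+x²)^{1/p}·z`. -/
noncomputable def γdw (γ' p t x z : ℝ) : ℝ :=
  γ' * Real.sqrt t * x * (1 + x ^ 2) ^ (1 / p) * z

/-- The constant `c(p₀)`: equal to `2^{p₀−4}` if `p₀ > 3` or `p₀ = 2`, and to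
`1/2` if `2 < p₀ ≤ 3`. -/
noncomputable def cdw (p₀ : ℝ) : ℝ :=
  if 2 < p₀ ∧ p₀ ≤ 3 then 1 / 2 else (2:ℝ) ^ (p₀ - 4)

open Set

namespace Real

theorem rpow_le_rpow_add_mul_sub {θ u w : ℝ} (hθ0 : 0 ≤ θ) (hθ1 : θ ≤ 1) (hu : 0 ≤ u)
    (hw : 0 < w) : u ^ θ ≤ w ^ θ + θ * w ^ (θ - 1) * (u - w) := by
  have hb := rpow_one_add_le_one_add_mul_self (s := u / w - 1)
    (by linarith [div_nonneg hu hw.le]) hθ0 hθ1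
  rw [add_sub_cancel] at hb
  calc u ^ θ = w ^ θ * (u / w) ^ θ := by
        rw [← mul_rpow hw.le (div_nonneg hu hw.le), mul_div_cancel₀ _ hw.ne']
    _ ≤ w ^ θ * (1 + θ * (u / w - 1)) := by gcongr
    _ = w ^ θ + θ * w ^ (θ - 1) * (u - w) := by
        rw [rpow_sub_one hw.ne']; field_simp

theorem abs_rpow_sub_two_mul_sq {p : ℝ} (hp : p ≠ 0) (a : ℝ) :
    |a| ^ (p - 2) * |a| ^ 2 = |a| ^ p := by
  rw [← rpow_natCast, ← rpow_add' (abs_nonneg a) (by simpa using hp)]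
  norm_num

theorem rpow_le_rpow_mul_of_le_mul_rpow_inv {B c W p q : ℝ} (hB : 0 ≤ B) (hc : 0 ≤ c)
    (hW : 1 ≤ W) (hp : 0 < p) (hq : 0 ≤ q) (hqp : q ≤ p) (h : B ≤ c * W ^ (1 / p)) :
    B ^ q ≤ c ^ q * W := by
  calc B ^ q ≤ (c * W ^ (1 / p)) ^ q := by gcongr
    _ = c ^ q * W ^ (q / p) := by
        rw [mul_rpow hc (by positivity), ← rpow_mul (by positivity), one_div_mul_eq_div]
    _ ≤ c ^ q * W := by
        gcongr
        exact rpow_le_self_of_one_le hW ((div_le_one hp).2 hqp)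

end Real

theorem hasDerivAt_mul_one_add_sq_rpow (θ u : ℝ) :
    HasDerivAt (fun v : ℝ => v * (1 + v ^ 2) ^ θ)
      ((1 + u ^ 2) ^ θ + 2 * θ * u ^ 2 * (1 + u ^ 2) ^ (θ - 1)) u := by
  refine ((hasDerivAt_id' u).mul (((hasDerivAt_pow 2 u).const_add 1).rpow_const (p := θ)
    (Or.inl (by positivity)))).congr_deriv ?_
  push_cast
  ring

theorem monotone_mul_one_add_sq_rpow {θ : ℝ} (hθ : 0 ≤ θ) :
    Monotone fun v : ℝ => v * (1 + v ^ 2) ^ θ :=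
  monotone_of_hasDerivAt_nonneg (hasDerivAt_mul_one_add_sq_rpow θ) fun u => by
    dsimp only; positivity

theorem hasDerivAt_sub_mul_rpow_mean (θ y u : ℝ) :
    HasDerivAt (fun v : ℝ => (v - y) * (1 + (v ^ 2 + v * y + y ^ 2) / 3) ^ θ)
      ((1 + (u ^ 2 + u * y + y ^ 2) / 3) ^ θ + θ * (1 + (u ^ 2 + u * y + y ^ 2) / 3) ^ (θ - 1)
        * ((1 + u ^ 2) - (1 + (u ^ 2 + u * y + y ^ 2) / 3))) u := by
  have hW : HasDerivAt (fun v : ℝ => 1 + (v ^ 2 + v * y + y ^ 2) / 3) ((2 * u + y) / 3) u := by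
    refine ((((hasDerivAt_pow 2 u).add ((hasDerivAt_id' u).mul_const y)).add_const
      (y ^ 2)).div_const 3).const_add 1 |>.congr_deriv ?_
    push_cast
    ring
  refine (((hasDerivAt_id' u).sub_const y).mul (hW.rpow_const (p := θ)
    (Or.inl (by nlinarith [sq_nonneg (u + y), sq_nonneg u, sq_nonneg y])))).congr_deriv ?_
  ring

theorem mul_one_add_sq_rpow_sub_le {θ : ℝ} (hθ0 : 0 ≤ θ) (hθ1 : θ ≤ 1) {x y : ℝ} (hyx : y ≤ x) :
    x * (1 + x ^ 2) ^ θ - y * (1 + y ^ 2) ^ θ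
      ≤ (1 + 2 * θ) * (x - y) * (1 + (x ^ 2 + x * y + y ^ 2) / 3) ^ θ := by
  have hmono : Monotone fun u : ℝ =>
      (1 + 2 * θ) * ((u - y) * (1 + (u ^ 2 + u * y + y ^ 2) / 3) ^ θ) - u * (1 + u ^ 2) ^ θ := by
    refine monotone_of_hasDerivAt_nonneg (fun u => ((hasDerivAt_sub_mul_rpow_mean θ y u).const_mul
      _).sub (hasDerivAt_mul_one_add_sq_rpow θ u)) fun u => ?_
    have hW : 0 < 1 + (u ^ 2 + u * y + y ^ 2) / 3 := by
      nlinarith [sq_nonneg (u + y), sq_nonneg u, sq_nonneg y]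
    have htangent := Real.rpow_le_rpow_add_mul_sub hθ0 hθ1 (by positivity : 0 ≤ 1 + u ^ 2) hW
    have hpow : u ^ 2 * (1 + u ^ 2) ^ (θ - 1) ≤ (1 + u ^ 2) ^ θ := by
      rw [Real.rpow_sub_one (by positivity), mul_div_assoc']
      have := Real.rpow_nonneg (by positivity : (0:ℝ) ≤ 1 + u ^ 2) θ
      exact div_le_of_le_mul₀ (by positivity) this (by nlinarith)
    simp only [Pi.zero_apply, sub_nonneg]
    nlinarith
  have h := hmono hyx
  simp only [sub_self, zero_mul, mul_zero, zero_sub] at h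
  linarith

theorem abs_mul_one_add_sq_rpow_sub_le {θ : ℝ} (hθ0 : 0 ≤ θ) (hθ1 : θ ≤ 1) (x y : ℝ) :
    |x * (1 + x ^ 2) ^ θ - y * (1 + y ^ 2) ^ θ|
      ≤ (1 + 2 * θ) * |x - y| * (1 + (x ^ 2 + x * y + y ^ 2) / 3) ^ θ := by
  rcases le_total y x with hyx | hxy
  · rw [abs_of_nonneg (sub_nonneg.2 (monotone_mul_one_add_sq_rpow hθ0 hyx)),
      abs_of_nonneg (sub_nonneg.2 hyx)]
    exact mul_one_add_sq_rpow_sub_le hθ0 hθ1 hyx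
  · rw [abs_sub_comm, abs_of_nonneg (sub_nonneg.2 (monotone_mul_one_add_sq_rpow hθ0 hxy)),
      abs_sub_comm, abs_of_nonneg (sub_nonneg.2 hxy)]
    convert mul_one_add_sq_rpow_sub_le hθ0 hθ1 hxy using 3
    ring

theorem sawtooth_le_one (s : ℝ) : sawtooth s ≤ 1 := by
  have := Int.lt_floor_add_one (s + 1 / 2)
  unfold sawtooth
  linarith

theorem drift_term_le {p₀ : ℝ} (hp₀ : 0 < p₀) (β' s x y : ℝ) :
    p₀ * |x - y| ^ (p₀ - 2) * (x - y) * (μdw β' s x - μdw β' s y)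
      ≤ p₀ * |x - y| ^ p₀ * (1 - β' * (x ^ 2 + x * y + y ^ 2)) := by
  have hμ : (x - y) * (μdw β' s x - μdw β' s y)
      ≤ |x - y| ^ 2 * (1 - β' * (x ^ 2 + x * y + y ^ 2)) := by
    have := mul_le_mul_of_nonneg_right (sawtooth_le_one s) (sq_nonneg (x - y))
    rw [sq_abs]
    unfold μdw
    linear_combination this
  calc p₀ * |x - y| ^ (p₀ - 2) * (x - y) * (μdw β' s x - μdw β' s y)
      = p₀ * |x - y| ^ (p₀ - 2) * ((x - y) * (μdw β' s x - μdw β' s y)) := by ring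
    _ ≤ p₀ * |x - y| ^ (p₀ - 2) * (|x - y| ^ 2 * (1 - β' * (x ^ 2 + x * y + y ^ 2))) := by
        gcongr
    _ = p₀ * |x - y| ^ p₀ * (1 - β' * (x ^ 2 + x * y + y ^ 2)) := by
        rw [← Real.abs_rpow_sub_two_mul_sq hp₀.ne' (x - y)]; ring

theorem diffusion_term_le {p₀ Λ t : ℝ} (hp₀ : 1 ≤ p₀) (hΛ : 0 ≤ Λ) (ht : t ∈ Icc (0:ℝ) 1)
    (σ' x y : ℝ) :
    p₀ * (p₀ - 1) * Λ / 2 * |x - y| ^ (p₀ - 2) * |σdw σ' t x - σdw σ' t y| ^ 2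
      ≤ 2 / 3 * p₀ * (p₀ - 1) * Λ * σ' ^ 2 * |x - y| ^ p₀ * (x ^ 2 + x * y + y ^ 2) := by
  have hσ : |σdw σ' t x - σdw σ' t y| ^ 2
      ≤ 4 / 3 * σ' ^ 2 * |x - y| ^ 2 * (x ^ 2 + x * y + y ^ 2) := by
    have hsq : (x + y) ^ 2 ≤ 4 / 3 * (x ^ 2 + x * y + y ^ 2) := by nlinarith [sq_nonneg (x - y)]
    calc |σdw σ' t x - σdw σ' t y| ^ 2 = σ' ^ 2 * (x - y) ^ 2 * (t * (x + y) ^ 2) := by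
          unfold σdw
          rw [sq_abs]
          linear_combination (σ' * (x - y) * (x + y)) ^ 2 * Real.sq_sqrt ht.1
      _ ≤ σ' ^ 2 * (x - y) ^ 2 * (1 * (4 / 3 * (x ^ 2 + x * y + y ^ 2))) := by
          gcongr
          exact ht.2
      _ = _ := by rw [sq_abs]; ring
  calc p₀ * (p₀ - 1) * Λ / 2 * |x - y| ^ (p₀ - 2) * |σdw σ' t x - σdw σ' t y| ^ 2
      ≤ p₀ * (p₀ - 1) * Λ / 2 * |x - y| ^ (p₀ - 2)
          * (4 / 3 * σ' ^ 2 * |x - y| ^ 2 * (x ^ 2 + x * y + y ^ 2)) := by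
        have : 0 ≤ p₀ - 1 := by linarith
        gcongr
    _ = _ := by rw [← Real.abs_rpow_sub_two_mul_sq (by linarith : 0 < p₀).ne' (x - y)]; ring

theorem jump_integral_le {p p₀ Λ γ' t : ℝ} (hp : 4 ≤ p) (hp₀ : 2 ≤ p₀) (hp₀p : p₀ ≤ p)
    (hΛ : 0 ≤ Λ) (hγ : 0 ≤ γ') (ht : t ∈ Icc (0:ℝ) 1) {ρ : Measure ℝ}
    (h2 : Integrable (fun z : ℝ => |z| ^ 2) ρ) (hp₀i : Integrable (fun z : ℝ => |z| ^ p₀) ρ)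
    (x y : ℝ) :
    ∫ z, (Λ * |x - y| ^ (p₀ - 2) * |γdw γ' p t x z - γdw γ' p t y z| ^ 2 +
        Λ ^ (p₀ - 1) * |γdw γ' p t x z - γdw γ' p t y z| ^ p₀) ∂ρ
      ≤ (9 / 4 * Λ * γ' ^ 2 * (∫ z, |z| ^ 2 ∂ρ) +
          ((3:ℝ) / 2) ^ p₀ * Λ ^ (p₀ - 1) * γ' ^ p₀ * (∫ z, |z| ^ p₀ ∂ρ))
        * (|x - y| ^ p₀ * (1 + (x ^ 2 + x * y + y ^ 2) / 3)) := by
  set W := 1 + (x ^ 2 + x * y + y ^ 2) / 3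
  set Δ := x * (1 + x ^ 2) ^ (1 / p) - y * (1 + y ^ 2) ^ (1 / p)
  have hp0 : 0 < p := by linarith
  have hW : 1 ≤ W :=
    le_add_of_nonneg_right (by nlinarith [sq_nonneg (x + y), sq_nonneg x, sq_nonneg y])
  have hB : |γ' * √t * Δ| ≤ 3 / 2 * γ' * |x - y| * W ^ (1 / p) := by
    have hθ : 1 + 2 * (1 / p) ≤ 3 / 2 := by
      linarith [one_div_le_one_div_of_le (by norm_num : (0:ℝ) < 4) hp]
    have hΔ := abs_mul_one_add_sq_rpow_sub_le (θ := 1 / p) (by positivity)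
      (by rw [div_le_one hp0]; linarith) x y
    rw [abs_mul, abs_mul, abs_of_nonneg hγ, abs_of_nonneg (Real.sqrt_nonneg t)]
    calc γ' * √t * |Δ| ≤ γ' * 1 * ((1 + 2 * (1 / p)) * |x - y| * W ^ (1 / p)) := by
          gcongr
          exact Real.sqrt_le_one.2 ht.2
      _ ≤ γ' * 1 * (3 / 2 * |x - y| * W ^ (1 / p)) := by gcongr
      _ = 3 / 2 * γ' * |x - y| * W ^ (1 / p) := by ring
  set B := |γ' * √t * Δ|
  have hB2 : B ^ 2 ≤ (3 / 2 * γ' * |x - y|) ^ 2 * W := by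
    have := Real.rpow_le_rpow_mul_of_le_mul_rpow_inv (q := 2) (abs_nonneg _) (by positivity) hW
      hp0 (by norm_num) (by linarith) hB
    simpa only [Real.rpow_two] using this
  have hBp : B ^ p₀ ≤ (3 / 2 * γ' * |x - y|) ^ p₀ * W :=
    Real.rpow_le_rpow_mul_of_le_mul_rpow_inv (abs_nonneg _) (by positivity) hW hp0 (by linarith)
      hp₀p hB
  have hpoint : ∀ z, Λ * |x - y| ^ (p₀ - 2) * |γdw γ' p t x z - γdw γ' p t y z| ^ 2 +
      Λ ^ (p₀ - 1) * |γdw γ' p t x z - γdw γ' p t y z| ^ p₀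
      = Λ * |x - y| ^ (p₀ - 2) * B ^ 2 * |z| ^ 2 + Λ ^ (p₀ - 1) * B ^ p₀ * |z| ^ p₀ := by
    intro z
    have : γdw γ' p t x z - γdw γ' p t y z = γ' * √t * Δ * z := by unfold γdw; ring
    rw [this, abs_mul, mul_pow, Real.mul_rpow (abs_nonneg _) (abs_nonneg _)]
    ring
  rw [integral_congr_ae (ae_of_all _ hpoint), integral_add (h2.const_mul _) (hp₀i.const_mul _),
    integral_const_mul, integral_const_mul]
  have hm2 : 0 ≤ ∫ z, |z| ^ 2 ∂ρ := integral_nonneg fun z => by positivity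
  have hmp : 0 ≤ ∫ z, |z| ^ p₀ ∂ρ := integral_nonneg fun z => by positivity
  have hsplit := Real.abs_rpow_sub_two_mul_sq (by linarith : p₀ ≠ 0) (x - y)
  calc _ ≤ Λ * |x - y| ^ (p₀ - 2) * ((3 / 2 * γ' * |x - y|) ^ 2 * W) * (∫ z, |z| ^ 2 ∂ρ)
        + Λ ^ (p₀ - 1) * ((3 / 2 * γ' * |x - y|) ^ p₀ * W) * (∫ z, |z| ^ p₀ ∂ρ) := by
        gcongr
    _ = _ := by
        rw [Real.mul_rpow (by positivity) (abs_nonneg _), Real.mul_rpow (by norm_num) hγ]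
        linear_combination (9 / 4 * Λ * γ' ^ 2 * W * ∫ z, |z| ^ 2 ∂ρ) * hsplit

theorem cdw_nonneg (p₀ : ℝ) : 0 ≤ cdw p₀ := by
  unfold cdw
  split_ifs <;> positivity

theorem cdw_le (p₀ : ℝ) : cdw p₀ ≤ (2:ℝ) ^ (p₀ - 4) + 1 / 2 := by
  unfold cdw
  split_ifs
  · linarith [Real.rpow_nonneg zero_le_two (p₀ - 4)]
  · linarith

theorem stmt_17_general (p p₀ Λ β' σ' γ' : ℝ) (hp : 4 ≤ p) (hp₀ : 2 ≤ p₀) (hp₀p : p₀ ≤ p)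
    (hΛ : 1 < Λ) (hγ : 0 < γ')
    (ρ : Measure ℝ)
    (h2 : Integrable (fun z : ℝ => |z| ^ 2) ρ)
    (hp₀i : Integrable (fun z : ℝ => |z| ^ p₀) ρ)
    (hconstraint :
      2 * (p₀ - 1) * Λ * σ' ^ 2 +
        (p₀ - 1) * ((2:ℝ) ^ (p₀ - 4) + 1 / 2) *
          (9 / 4 * Λ * γ' ^ 2 * (∫ z, |z| ^ 2 ∂ρ) +
            ((3:ℝ) / 2) ^ p₀ * Λ ^ (p₀ - 1) * γ' ^ p₀ * (∫ z, |z| ^ p₀ ∂ρ)) ≤ 3 * β') :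
    ∃ K > (0:ℝ), ∀ s ∈ Set.Icc (0:ℝ) 1, ∀ t ∈ Set.Icc (0:ℝ) 1, ∀ x y : ℝ,
      p₀ * |x - y| ^ (p₀ - 2) * (x - y) * (μdw β' s x - μdw β' s y)
        + p₀ * (p₀ - 1) * Λ / 2 * |x - y| ^ (p₀ - 2) * |σdw σ' t x - σdw σ' t y| ^ 2
        + p₀ * (p₀ - 1) * cdw p₀ *
            ∫ z, (Λ * |x - y| ^ (p₀ - 2) * |γdw γ' p t x z - γdw γ' p t y z| ^ 2 +
                Λ ^ (p₀ - 1) * |γdw γ' p t x z - γdw γ' p t y z| ^ p₀) ∂ρ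
        ≤ K * |x - y| ^ p₀ := by
  set S := 9 / 4 * Λ * γ' ^ 2 * (∫ z, |z| ^ 2 ∂ρ) +
    ((3:ℝ) / 2) ^ p₀ * Λ ^ (p₀ - 1) * γ' ^ p₀ * (∫ z, |z| ^ p₀ ∂ρ)
  have hΛ0 : 0 ≤ Λ := by linarith
  have hS : 0 ≤ S := by
    have hm2 : 0 ≤ ∫ z, |z| ^ 2 ∂ρ := integral_nonneg fun z => by positivity
    have hmp : 0 ≤ ∫ z, |z| ^ p₀ ∂ρ := integral_nonneg fun z => by positivity
    positivity
  have hc : 0 ≤ p₀ * (p₀ - 1) * cdw p₀ := by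
    have : 0 ≤ p₀ - 1 := by linarith
    have := cdw_nonneg p₀
    positivity
  have hbudget : 2 / 3 * p₀ * (p₀ - 1) * Λ * σ' ^ 2 + p₀ * (p₀ - 1) * cdw p₀ * S / 3 ≤ p₀ * β' := by
    have hcS := mul_le_mul_of_nonneg_right
      (mul_le_mul_of_nonneg_left (cdw_le p₀) (by linarith : 0 ≤ p₀ - 1)) hS
    nlinarith
  refine ⟨p₀ + p₀ * (p₀ - 1) * cdw p₀ * S + 1, by positivity, fun s _ t ht x y => ?_⟩
  have hQ : 0 ≤ |x - y| ^ p₀ * (x ^ 2 + x * y + y ^ 2) :=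
    mul_nonneg (by positivity) (by nlinarith [sq_nonneg (x + y), sq_nonneg x, sq_nonneg y])
  have hdrift := drift_term_le (by linarith : 0 < p₀) β' s x y
  have hdiffusion := diffusion_term_le (by linarith : 1 ≤ p₀) hΛ0 ht σ' x y
  have hjump := mul_le_mul_of_nonneg_left
    (jump_integral_le hp hp₀ hp₀p hΛ0 hγ.le ht h2 hp₀i x y) hc
  linear_combination hdrift + hdiffusion + hjump + mul_le_mul_of_nonneg_right hbudget hQ
    + (by positivity : 0 ≤ |x - y| ^ p₀)

/-- Verification (Appendix A of the paper) that the coefficients of the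
Lévy-driven double-well SDE satisfy the `p₀`-th order monotonicity condition of
Assumption 2.14 under the parameter constraint (eq:for_gamhat). -/
theorem stmt_17 (p p₀ Λ β' σ' γ' : ℝ) (hp : 4 ≤ p) (hp₀ : 2 ≤ p₀) (hp₀p : p₀ ≤ p)
    (hΛ : 1 < Λ) (hβ : 0 < β') (hσ : 0 < σ') (hγ : 0 < γ')
    (ρ : Measure ℝ)
    (h2 : Integrable (fun z : ℝ => |z| ^ 2) ρ)
    (hp₀i : Integrable (fun z : ℝ => |z| ^ p₀) ρ)
    (hconstraint :
      2 * (p₀ - 1) * Λ * σ' ^ 2 +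
        (p₀ - 1) * ((2:ℝ) ^ (p₀ - 4) + 1 / 2) *
          (9 / 4 * Λ * γ' ^ 2 * (∫ z, |z| ^ 2 ∂ρ) +
            ((3:ℝ) / 2) ^ p₀ * Λ ^ (p₀ - 1) * γ' ^ p₀ * (∫ z, |z| ^ p₀ ∂ρ)) ≤ 3 * β') :
    ∃ K > (0:ℝ), ∀ s ∈ Set.Icc (0:ℝ) 1, ∀ t ∈ Set.Icc (0:ℝ) 1, ∀ x y : ℝ,
      p₀ * |x - y| ^ (p₀ - 2) * (x - y) * (μdw β' s x - μdw β' s y)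
        + p₀ * (p₀ - 1) * Λ / 2 * |x - y| ^ (p₀ - 2) * |σdw σ' t x - σdw σ' t y| ^ 2
        + p₀ * (p₀ - 1) * cdw p₀ *
            ∫ z, (Λ * |x - y| ^ (p₀ - 2) * |γdw γ' p t x z - γdw γ' p t y z| ^ 2 +
                Λ ^ (p₀ - 1) * |γdw γ' p t x z - γdw γ' p t y z| ^ p₀) ∂ρ
        ≤ K * |x - y| ^ p₀ :=
  stmt_17_general p p₀ Λ β' σ' γ' hp hp₀ hp₀p hΛ hγ ρ h2 hp₀i hconstraint
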